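/- arXiv:1905.03530 — 2 statements merged into one kernel-verified Lean document; each statement's English description precedes it below -/
import Mathlib

section
/- Under conditions (1) b_R = b_NR, (2) d_R = d_B, and (3) d_B = d_NB, the approximate expectation of the double-calibration estimator, AE = b_R^t T_{X(B)} + d_R^t (T_Z − T_{Z(B)}), equals the whole-population total T_Y = Σ_{j∈U} y_j. -/
open Matrix Finset

lemma aux9 {ι : Type*} {n : ℕ} (hn : 0 < n) (s : Finset ι) (y : ι → ℝ)
    (v : ι → Fin n → ℝ) (hv : ∀ j, v j ⟨0, hn⟩ = 1)
    (A : Matrix (Fin n) (Fin n) ℝ) (hA : A = ∑ j ∈ s, vecMulVec (v j) (v j))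
    (hAu : IsUnit A) (b : Fin n → ℝ) (hb : b = A⁻¹ *ᵥ (∑ j ∈ s, y j • v j)) :
    b ⬝ᵥ (∑ j ∈ s, v j) = ∑ j ∈ s, y j := by
  have hdet : IsUnit A.det := (Matrix.isUnit_iff_isUnit_det A).mp hAu
  have hAb : A *ᵥ b = ∑ j ∈ s, y j • v j := by
    rw [hb, mulVec_mulVec, Matrix.mul_nonsing_inv _ hdet, one_mulVec]
  have h0 := congrFun hAb ⟨0, hn⟩
  simp only [hA, mulVec, dotProduct, Finset.sum_apply, Matrix.sum_apply,
    vecMulVec_apply, Pi.smul_apply, smul_eq_mul, hv, mul_one] at h0 ⊢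
  rw [← h0]
  simp [Finset.sum_mul, Finset.mul_sum, mul_comm]

/-- under conditions (1) `b_R = b_NR`, (2) `d_R = d_B`,
(3) `d_B = d_NB`, the approximate expectation
`b_R^t T_{X(B)} + d_R^t (T_Z - T_{Z(B)})` of the double-calibration estimator
equals the whole-population total `T_Y`. -/
theorem stmt9 {ι : Type*} [Fintype ι] [DecidableEq ι] {K M : ℕ}
    (hK : 0 < K) (hM : 0 < M)
    (UB R : Finset ι) (hRB : R ⊆ UB)
    (y : ι → ℝ)
    (x : ι → Fin K → ℝ) (hx : ∀ j, x j ⟨0, hK⟩ = 1)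
    (z : ι → Fin M → ℝ) (hz : ∀ j, z j ⟨0, hM⟩ = 1)
    -- least-squares coefficients of Y on X over the respondent and
    -- nonrespondent strata of U_B
    (AR ANR : Matrix (Fin K) (Fin K) ℝ)
    (hAR : AR = ∑ j ∈ R, vecMulVec (x j) (x j)) (hARu : IsUnit AR)
    (hANR : ANR = ∑ j ∈ UB \ R, vecMulVec (x j) (x j)) (hANRu : IsUnit ANR)
    (bR bNR : Fin K → ℝ)
    (hbR : bR = AR⁻¹ *ᵥ (∑ j ∈ R, y j • x j))
    (hbNR : bNR = ANR⁻¹ *ᵥ (∑ j ∈ UB \ R, y j • x j))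
    -- least-squares coefficients of Y on Z over U_{B(R)}, U_B and U - U_B
    (CR CB CNB : Matrix (Fin M) (Fin M) ℝ)
    (hCR : CR = ∑ j ∈ R, vecMulVec (z j) (z j)) (hCRu : IsUnit CR)
    (hCB : CB = ∑ j ∈ UB, vecMulVec (z j) (z j)) (hCBu : IsUnit CB)
    (hCNB : CNB = ∑ j ∈ UBᶜ, vecMulVec (z j) (z j)) (hCNBu : IsUnit CNB)
    (dR dB dNB : Fin M → ℝ)
    (hdR : dR = CR⁻¹ *ᵥ (∑ j ∈ R, y j • z j))
    (hdB : dB = CB⁻¹ *ᵥ (∑ j ∈ UB, y j • z j))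
    (hdNB : dNB = CNB⁻¹ *ᵥ (∑ j ∈ UBᶜ, y j • z j))
    -- conditions 1.-3.
    (h1 : bR = bNR) (h2 : dR = dB) (h3 : dB = dNB) :
    bR ⬝ᵥ (∑ j ∈ UB, x j) + dR ⬝ᵥ ((∑ j, z j) - ∑ j ∈ UB, z j) = ∑ j, y j := by
  have hR := aux9 hK R y x hx AR hAR hARu bR hbR
  have hNR := aux9 hK (UB \ R) y x hx ANR hANR hANRu bNR hbNR
  have hB := aux9 hM UB y z hz CB hCB hCBu dB hdB
  have hNB := aux9 hM UBᶜ y z hz CNB hCNB hCNBu dNB hdNB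
  have hUB : ∑ j ∈ UB, x j = (∑ j ∈ R, x j) + ∑ j ∈ UB \ R, x j := by
    rw [add_comm, Finset.sum_sdiff hRB]
  have hZc : (∑ j, z j) - ∑ j ∈ UB, z j = ∑ j ∈ UBᶜ, z j := by
    rw [sub_eq_iff_eq_add, add_comm, Finset.sum_add_sum_compl]
  have hYc : (∑ j, y j) = (∑ j ∈ UB, y j) + ∑ j ∈ UBᶜ, y j :=
    (Finset.sum_add_sum_compl UB y).symm
  rw [hUB, hZc, dotProduct_add, hR, h1, hNR, h2, h3, hNB, hYc,
    add_comm (∑ j ∈ R, y j), Finset.sum_sdiff hRB]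
end

section
/- For the double-calibration estimator T̂_{Y(dcal)} = â_R^t Â_R^{-1} T_{X(B)} + ĉ_R^t Ĉ_R^{-1} (T_Z − T̂_{Z(B)}) viewed as a function of the five HT-estimated quantities (Â_R, â_R, Ĉ_R, ĉ_R, T̂_{Z(B)}), its first-order Taylor expansion around the population values (A_R, a_R, C_R, c_R, T_{Z(B)}) has linear term Σ_{j∈S} u_j/π_j − Σ_{j∈U_B} u_j, where u_j = r_j (y_j x_j^t − a_R^t A_R^{-1} x_j x_j^t) A_R^{-1} T_{X(B)} + r_j (y_j z_j^t − c_R^t C_R^{-1} z_j z_j^t) C_R^{-1} (T_Z − T_{Z(B)}) − c_R^t C_R^{-1} z_j. -/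
/-!
Matrix inversion is differentiable at invertible matrices, with derivative `dA ↦ -A⁻¹ dA A⁻¹`,
so the estimator is differentiable at the population point and its derivative in a direction
`(dA, da, dC, dc, dT)` is explicit. Each Horvitz–Thompson deviation is
`∑_{j∈S} v_j/π_j - ∑_{j∈U_B} v_j` for one and the same per-unit direction
`v_j = (r_j x_j x_jᵗ, r_j y_j x_j, r_j z_j z_jᵗ, r_j y_j z_j, z_j)`; by linearity of the derivative
the linear term is therefore `∑_{j∈S} u_j/π_j - ∑_{j∈U_B} u_j`, where `u_j` is the derivative in
the direction `v_j`.
-/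

open Matrix Finset

theorem hasDerivAt_add_smul {𝕜 V : Type*} [NontriviallyNormedField 𝕜] [NormedAddCommGroup V]
    [NormedSpace 𝕜 V] (v dv : V) (t : 𝕜) : HasDerivAt (fun s : 𝕜 => v + s • dv) dv t := by
  simpa using ((hasDerivAt_id t).smul_const dv).const_add v

section DotProduct

variable {𝕜 : Type*} [NontriviallyNormedField 𝕜] {m n : Type*} [Fintype n]

theorem HasDerivAt.dotProduct {f g : 𝕜 → n → 𝕜} {f' g' : n → 𝕜} {t : 𝕜}
    (hf : HasDerivAt f f' t) (hg : HasDerivAt g g' t) :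
    HasDerivAt (fun s => f s ⬝ᵥ g s) (f' ⬝ᵥ g t + f t ⬝ᵥ g') t := by
  have := HasDerivAt.fun_sum (u := univ) fun i _ =>
    (hasDerivAt_pi.1 hf i).fun_mul (hasDerivAt_pi.1 hg i)
  exact this.congr_deriv Finset.sum_add_distrib

theorem HasDerivAt.mulVec {M : 𝕜 → m → n → 𝕜} {v : 𝕜 → n → 𝕜} {M' : m → n → 𝕜} {v' : n → 𝕜}
    {t : 𝕜} (hM : HasDerivAt M M' t) (hv : HasDerivAt v v' t) :
    HasDerivAt (fun s => of (M s) *ᵥ v s) (of M' *ᵥ v t + of (M t) *ᵥ v') t :=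
  hasDerivAt_pi.2 fun i => (hasDerivAt_pi.1 hM i).dotProduct hv

variable {E : Type*} [NormedAddCommGroup E] [NormedSpace 𝕜 E] {x : E}

theorem DifferentiableAt.dotProduct {f g : E → n → 𝕜}
    (hf : DifferentiableAt 𝕜 f x) (hg : DifferentiableAt 𝕜 g x) :
    DifferentiableAt 𝕜 (fun y => f y ⬝ᵥ g y) x :=
  DifferentiableAt.fun_sum fun i _ =>
    (differentiableAt_pi.1 hf i).fun_mul (differentiableAt_pi.1 hg i)

theorem DifferentiableAt.mulVec {M : E → m → n → 𝕜} {v : E → n → 𝕜}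
    (hM : DifferentiableAt 𝕜 M x) (hv : DifferentiableAt 𝕜 v x) :
    DifferentiableAt 𝕜 (fun y => of (M y) *ᵥ v y) x :=
  differentiableAt_pi.2 fun i => (differentiableAt_pi.1 hM i).dotProduct hv

end DotProduct

section MatrixInverse

variable {n : Type*} [Fintype n] [DecidableEq n]

-- The ∞-operator norm makes `Matrix n n ℝ` a complete normed algebra, in which `⁻¹` is
-- `Ring.inverse`; all norms on matrices are equivalent, so the choice does not affect derivatives.
attribute [local instance] Matrix.linftyOpNormedRing Matrix.linftyOpNormedAlgebra

private noncomputable def ofCLE : (n → n → ℝ) ≃L[ℝ] Matrix n n ℝ :=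
  (Matrix.ofLinearEquiv ℝ).toContinuousLinearEquiv

theorem DifferentiableAt.matrix_inv {E : Type*} [NormedAddCommGroup E] [NormedSpace ℝ E]
    {A : E → n → n → ℝ} {x : E} (hA : DifferentiableAt ℝ A x) (hu : IsUnit (of (A x))) :
    DifferentiableAt ℝ (fun y => of.symm (of (A y))⁻¹) x := by
  simp only [Matrix.nonsing_inv_eq_ringInverse]
  exact ofCLE.symm.differentiableAt.comp x
    ((differentiableAt_inverse hu).comp x (ofCLE.differentiableAt.comp x hA))

theorem HasDerivAt.matrix_inv {A : ℝ → n → n → ℝ} {A' : n → n → ℝ} {t : ℝ}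
    (hA : HasDerivAt A A' t) (hu : IsUnit (of (A t))) :
    HasDerivAt (fun s => of.symm (of (A s))⁻¹)
      (of.symm (-((of (A t))⁻¹ * of A' * (of (A t))⁻¹))) t := by
  obtain ⟨u, hu⟩ := hu
  have hA' : HasDerivAt (ofCLE ∘ A) (ofCLE A') t := ofCLE.hasFDerivAt.comp_hasDerivAt t hA
  have := ofCLE.symm.hasFDerivAt.comp_hasDerivAt t
    ((hasFDerivAt_ringInverse (𝕜 := ℝ) u).comp_hasDerivAt_of_eq t hA' hu)
  have hderiv : ofCLE.symm (-(ContinuousLinearMap.mulLeftRight ℝ (Matrix n n ℝ) ↑u⁻¹ ↑u⁻¹)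
      (ofCLE A')) = of.symm (-((of (A t))⁻¹ * of A' * (of (A t))⁻¹)) := by
    simp [ofCLE, ← hu, Matrix.coe_units_inv]
  refine (this.congr_deriv hderiv).congr_of_eventuallyEq (.of_forall fun s => ?_)
  exact congrArg of.symm (nonsing_inv_eq_ringInverse _)

end MatrixInverse

section BilinearFormWithInverse

variable {n : Type*} [Fintype n] [DecidableEq n]

theorem DifferentiableAt.dotProduct_inv_mulVec {E : Type*} [NormedAddCommGroup E]
    [NormedSpace ℝ E] {a w : E → n → ℝ} {A : E → n → n → ℝ} {x : E}
    (ha : DifferentiableAt ℝ a x) (hA : DifferentiableAt ℝ A x) (hw : DifferentiableAt ℝ w x)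
    (hu : IsUnit (of (A x))) :
    DifferentiableAt ℝ (fun y => a y ⬝ᵥ ((of (A y))⁻¹ *ᵥ w y)) x :=
  ha.dotProduct ((hA.matrix_inv hu).mulVec hw)

theorem HasDerivAt.dotProduct_inv_mulVec {a w : ℝ → n → ℝ} {A : ℝ → n → n → ℝ}
    {a' w' : n → ℝ} {A' : n → n → ℝ} {t : ℝ}
    (ha : HasDerivAt a a' t) (hA : HasDerivAt A A' t) (hw : HasDerivAt w w' t)
    (hu : IsUnit (of (A t))) :
    HasDerivAt (fun s => a s ⬝ᵥ ((of (A s))⁻¹ *ᵥ w s))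
      (a' ⬝ᵥ ((of (A t))⁻¹ *ᵥ w t) - (a t ᵥ* (of (A t))⁻¹) ⬝ᵥ (of A' *ᵥ ((of (A t))⁻¹ *ᵥ w t))
        + a t ⬝ᵥ ((of (A t))⁻¹ *ᵥ w')) t := by
  refine (ha.dotProduct ((hA.matrix_inv hu).mulVec hw)).congr_deriv ?_
  simp only [Equiv.apply_symm_apply, neg_mulVec, ← mulVec_mulVec, dotProduct_add,
    dotProduct_neg, dotProduct_mulVec (a t) (of (A t))⁻¹]
  ring

end BilinearFormWithInverse

section DoubleCalibration

variable {m n : Type*} [Fintype m] [DecidableEq m] [Fintype n] [DecidableEq n]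

/-- `â ᵗ Â⁻¹ T_X + ĉ ᵗ Ĉ⁻¹ (T_Z - T̂_Z)` as a function of `(Â, â, Ĉ, ĉ, T̂_Z)`. -/
noncomputable def doubleCalibration (TX : m → ℝ) (TZ : n → ℝ)
    (q : (m → m → ℝ) × (m → ℝ) × (n → n → ℝ) × (n → ℝ) × (n → ℝ)) : ℝ :=
  q.2.1 ⬝ᵥ ((of q.1)⁻¹ *ᵥ TX) + q.2.2.2.1 ⬝ᵥ ((of q.2.2.1)⁻¹ *ᵥ (TZ - q.2.2.2.2))

variable {TX : m → ℝ} {TZ : n → ℝ} {A : m → m → ℝ} {a : m → ℝ} {C : n → n → ℝ}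
  {c T : n → ℝ}

theorem differentiableAt_doubleCalibration (hA : IsUnit (of A)) (hC : IsUnit (of C)) :
    DifferentiableAt ℝ (doubleCalibration TX TZ) (A, a, C, c, T) :=
  (DifferentiableAt.dotProduct_inv_mulVec (by fun_prop) (by fun_prop) (by fun_prop) hA).add
    (DifferentiableAt.dotProduct_inv_mulVec (by fun_prop) (by fun_prop) (by fun_prop) hC)

theorem fderiv_doubleCalibration_apply (hA : IsUnit (of A)) (hC : IsUnit (of C))
    (dA : m → m → ℝ) (da : m → ℝ) (dC : n → n → ℝ) (dc dT : n → ℝ) :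
    fderiv ℝ (doubleCalibration TX TZ) (A, a, C, c, T) (dA, da, dC, dc, dT) =
      da ⬝ᵥ ((of A)⁻¹ *ᵥ TX) - (a ᵥ* (of A)⁻¹) ⬝ᵥ (of dA *ᵥ ((of A)⁻¹ *ᵥ TX))
        + (dc ⬝ᵥ ((of C)⁻¹ *ᵥ (TZ - T))
          - (c ᵥ* (of C)⁻¹) ⬝ᵥ (of dC *ᵥ ((of C)⁻¹ *ᵥ (TZ - T)))
          - (c ᵥ* (of C)⁻¹) ⬝ᵥ dT) := by
  rw [← (differentiableAt_doubleCalibration hA hC).lineDeriv_eq_fderiv]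
  refine HasLineDerivAt.lineDeriv ?_
  have := (HasDerivAt.dotProduct_inv_mulVec (hasDerivAt_add_smul a da 0)
      (hasDerivAt_add_smul A dA 0) (hasDerivAt_const 0 TX) (by simpa using hA)).add
    (HasDerivAt.dotProduct_inv_mulVec (hasDerivAt_add_smul c dc 0)
      (hasDerivAt_add_smul C dC 0) ((hasDerivAt_add_smul T dT 0).const_sub TZ)
      (by simpa using hC))
  simp only [zero_smul, add_zero] at this
  refine this.congr_deriv ?_
  simp only [mulVec_zero, dotProduct_zero, mulVec_neg, dotProduct_neg, dotProduct_mulVec c]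
  ring

end DoubleCalibration

theorem stmt10_general {ι : Type*} [Fintype ι] {K M : ℕ}
    (S : Finset ι) (π : ι → ℝ)
    (r : ι → ℝ)
    (y : ι → ℝ) (x : ι → Fin K → ℝ) (z : ι → Fin M → ℝ)
    (TZ : Fin M → ℝ) (TXB : Fin K → ℝ)
    (AR : Matrix (Fin K) (Fin K) ℝ)
    (hAR : AR = ∑ j, r j • vecMulVec (x j) (x j)) (hARu : IsUnit AR)
    (aR : Fin K → ℝ) (haR : aR = ∑ j, r j • (y j • x j))
    (CR : Matrix (Fin M) (Fin M) ℝ)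
    (hCR : CR = ∑ j, r j • vecMulVec (z j) (z j)) (hCRu : IsUnit CR)
    (cR : Fin M → ℝ) (hcR : cR = ∑ j, r j • (y j • z j))
    (TZB : Fin M → ℝ) (hTZB : TZB = ∑ j, z j)
    -- the estimator as a function of the five estimated quantities
    (F : ((Fin K → Fin K → ℝ) × (Fin K → ℝ) × (Fin M → Fin M → ℝ) ×
          (Fin M → ℝ) × (Fin M → ℝ)) → ℝ)
    (hF : F = fun q => q.2.1 ⬝ᵥ ((Matrix.of q.1)⁻¹ *ᵥ TXB)
        + q.2.2.2.1 ⬝ᵥ ((Matrix.of q.2.2.1)⁻¹ *ᵥ (TZ - q.2.2.2.2)))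
    -- HT estimates of the five quantities
    (AhR : Matrix (Fin K) (Fin K) ℝ)
    (hAhR : AhR = ∑ j ∈ S, (π j)⁻¹ • (r j • vecMulVec (x j) (x j)))
    (ahR : Fin K → ℝ) (hahR : ahR = ∑ j ∈ S, (π j)⁻¹ • (r j • (y j • x j)))
    (ChR : Matrix (Fin M) (Fin M) ℝ)
    (hChR : ChR = ∑ j ∈ S, (π j)⁻¹ • (r j • vecMulVec (z j) (z j)))
    (chR : Fin M → ℝ) (hchR : chR = ∑ j ∈ S, (π j)⁻¹ • (r j • (y j • z j)))
    (ThZB : Fin M → ℝ) (hThZB : ThZB = ∑ j ∈ S, (π j)⁻¹ • z j)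
    -- the influence values
    (u : ι → ℝ)
    (hu : u = fun j =>
        r j * (y j * (x j ⬝ᵥ (AR⁻¹ *ᵥ TXB))
          - ((aR ᵥ* AR⁻¹) ⬝ᵥ x j) * (x j ⬝ᵥ (AR⁻¹ *ᵥ TXB)))
      + r j * (y j * (z j ⬝ᵥ (CR⁻¹ *ᵥ (TZ - TZB)))
          - ((cR ᵥ* CR⁻¹) ⬝ᵥ z j) * (z j ⬝ᵥ (CR⁻¹ *ᵥ (TZ - TZB))))
      - (cR ᵥ* CR⁻¹) ⬝ᵥ z j) :
    DifferentiableAt ℝ F (Matrix.of.symm AR, aR, Matrix.of.symm CR, cR, TZB) ∧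
      fderiv ℝ F (Matrix.of.symm AR, aR, Matrix.of.symm CR, cR, TZB)
          (Matrix.of.symm AhR - Matrix.of.symm AR, ahR - aR,
            Matrix.of.symm ChR - Matrix.of.symm CR, chR - cR, ThZB - TZB)
        = (∑ j ∈ S, u j / π j) - ∑ j, u j := by
  have hF' : F = doubleCalibration TXB TZ := hF
  subst hF'
  refine ⟨differentiableAt_doubleCalibration hARu hCRu, ?_⟩
  set v : ι → (Fin K → Fin K → ℝ) × (Fin K → ℝ) × (Fin M → Fin M → ℝ) × (Fin M → ℝ) ×
      (Fin M → ℝ) := fun j =>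
    (of.symm (r j • vecMulVec (x j) (x j)), r j • y j • x j,
      of.symm (r j • vecMulVec (z j) (z j)), r j • y j • z j, z j) with hv_def
  have hdeviation : (of.symm AhR - of.symm AR, ahR - aR, of.symm ChR - of.symm CR, chR - cR,
      ThZB - TZB) = ∑ j ∈ S, (π j)⁻¹ • v j - ∑ j, v j := by
    subst hAhR hahR hChR hchR hThZB hAR haR hCR hcR hTZB
    ext <;> simp [hv_def, Prod.fst_sum, Prod.snd_sum, Finset.sum_apply, Matrix.sum_apply]
  have hinfluence : ∀ j, fderiv ℝ (doubleCalibration TXB TZ)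
      (of.symm AR, aR, of.symm CR, cR, TZB) (v j) = u j := by
    intro j
    rw [hv_def, fderiv_doubleCalibration_apply (A := of.symm AR) (C := of.symm CR) hARu hCRu, hu]
    simp only [Equiv.apply_symm_apply, smul_mulVec, vecMulVec_mulVec, op_smul_eq_smul,
      smul_dotProduct, dotProduct_smul, smul_eq_mul]
    ring
  rw [hdeviation, map_sub, map_sum, map_sum]
  simp only [map_smul, hinfluence, smul_eq_mul, div_eq_inv_mul]

/-- the double-calibration estimator, viewed as a function of the
five HT-estimated quantities `(Â_R, â_R, Ĉ_R, ĉ_R, T̂_{Z(B)})`, is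
differentiable at the population point `(A_R, a_R, C_R, c_R, T_{Z(B)})`, and
the linear term of its first-order Taylor expansion (the Fréchet derivative
applied to the HT deviations) equals `∑_{j∈S} u_j/π_j - ∑_{j∈U_B} u_j`, with
`u_j` the influence values. -/
theorem stmt10 {ι : Type*} [Fintype ι] [DecidableEq ι] {K M : ℕ}
    (S : Finset ι) (π : ι → ℝ) (hπ : ∀ j, 0 < π j)
    (r : ι → ℝ) (hr : ∀ j, r j = 0 ∨ r j = 1)
    (y : ι → ℝ) (x : ι → Fin K → ℝ) (z : ι → Fin M → ℝ)
    (TZ : Fin M → ℝ) (TXB : Fin K → ℝ) (hTXB : TXB = ∑ j, x j)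
    (AR : Matrix (Fin K) (Fin K) ℝ)
    (hAR : AR = ∑ j, r j • vecMulVec (x j) (x j)) (hARu : IsUnit AR)
    (aR : Fin K → ℝ) (haR : aR = ∑ j, r j • (y j • x j))
    (CR : Matrix (Fin M) (Fin M) ℝ)
    (hCR : CR = ∑ j, r j • vecMulVec (z j) (z j)) (hCRu : IsUnit CR)
    (cR : Fin M → ℝ) (hcR : cR = ∑ j, r j • (y j • z j))
    (TZB : Fin M → ℝ) (hTZB : TZB = ∑ j, z j)
    -- the estimator as a function of the five estimated quantities
    (F : ((Fin K → Fin K → ℝ) × (Fin K → ℝ) × (Fin M → Fin M → ℝ) ×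
          (Fin M → ℝ) × (Fin M → ℝ)) → ℝ)
    (hF : F = fun q => q.2.1 ⬝ᵥ ((Matrix.of q.1)⁻¹ *ᵥ TXB)
        + q.2.2.2.1 ⬝ᵥ ((Matrix.of q.2.2.1)⁻¹ *ᵥ (TZ - q.2.2.2.2)))
    -- HT estimates of the five quantities
    (AhR : Matrix (Fin K) (Fin K) ℝ)
    (hAhR : AhR = ∑ j ∈ S, (π j)⁻¹ • (r j • vecMulVec (x j) (x j)))
    (ahR : Fin K → ℝ) (hahR : ahR = ∑ j ∈ S, (π j)⁻¹ • (r j • (y j • x j)))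
    (ChR : Matrix (Fin M) (Fin M) ℝ)
    (hChR : ChR = ∑ j ∈ S, (π j)⁻¹ • (r j • vecMulVec (z j) (z j)))
    (chR : Fin M → ℝ) (hchR : chR = ∑ j ∈ S, (π j)⁻¹ • (r j • (y j • z j)))
    (ThZB : Fin M → ℝ) (hThZB : ThZB = ∑ j ∈ S, (π j)⁻¹ • z j)
    -- the influence values
    (u : ι → ℝ)
    (hu : u = fun j =>
        r j * (y j * (x j ⬝ᵥ (AR⁻¹ *ᵥ TXB))
          - ((aR ᵥ* AR⁻¹) ⬝ᵥ x j) * (x j ⬝ᵥ (AR⁻¹ *ᵥ TXB)))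
      + r j * (y j * (z j ⬝ᵥ (CR⁻¹ *ᵥ (TZ - TZB)))
          - ((cR ᵥ* CR⁻¹) ⬝ᵥ z j) * (z j ⬝ᵥ (CR⁻¹ *ᵥ (TZ - TZB))))
      - (cR ᵥ* CR⁻¹) ⬝ᵥ z j) :
    DifferentiableAt ℝ F (Matrix.of.symm AR, aR, Matrix.of.symm CR, cR, TZB) ∧
      fderiv ℝ F (Matrix.of.symm AR, aR, Matrix.of.symm CR, cR, TZB)
          (Matrix.of.symm AhR - Matrix.of.symm AR, ahR - aR,
            Matrix.of.symm ChR - Matrix.of.symm CR, chR - cR, ThZB - TZB)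
        = (∑ j ∈ S, u j / π j) - ∑ j, u j :=
  stmt10_general S π r y x z TZ TXB AR hAR hARu aR haR CR hCR hCRu cR hcR TZB hTZB F hF AhR hAhR ahR
    hahR ChR hChR chR hchR ThZB hThZB u hu
end
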